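/- Let L ∈ R^{n₁×r}, R ∈ R^{n₂×r}, and let Q, Q̄ ∈ GL(r) be invertible r×r matrices. Let Σ_star be an r×r positive diagonal matrix and suppose ‖(R·Q^{-T} − R_star)·Σ_star^{-1/2}‖_op < 1, where R_star = V_star·Σ_star^{1/2} with V_star having orthonormal columns, and R·Q^{-T} has full column rank. Then ‖Σ_star^{1/2}·Q̄^{-1}·Q·Σ_star^{1/2} − Σ_star‖_op ≤ ‖R·(Q̄^{-T} − Q^{-T})·Σ_star^{1/2}‖_op / (1 − ‖(R·Q^{-T} − R_star)·Σ_star^{-1/2}‖_op). -/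

import Mathlib

open Matrix

/-- The operator norm (largest singular value) of a matrix. -/
noncomputable def opNorm {n₁ n₂ : ℕ} (A : Matrix (Fin n₁) (Fin n₂) ℝ) : ℝ :=
  ‖LinearMap.toContinuousLinearMap (Matrix.toEuclideanLin A)‖

/-
With `S = Σ_star^{1/2}` and `M = R Q^{-T} S⁻¹`, the alignment error `D = S Q̄⁻¹ Q S - Σ_star`
satisfies `M Dᵀ = R (Q̄^{-T} - Q^{-T}) S`. Since `R_star S⁻¹ = V_star` has orthonormal columns,
`M = V_star + (R Q^{-T} - R_star) S⁻¹` is a perturbation of an isometry by a matrix of norm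
`ε < 1`, so `‖M X‖ ≥ (1 - ε) ‖X‖` for every `X`; applied to `X = Dᵀ` this is the bound.
-/

open scoped Matrix.Norms.L2Operator

namespace Matrix

section Isometry

variable {𝕜 : Type*} [RCLike 𝕜] {l m n : Type*} [Fintype l] [Fintype m] [Fintype n]
  [DecidableEq l] [DecidableEq n] {V : Matrix m n 𝕜}

lemma l2_opNorm_le_one_of_conjTranspose_mul_self_eq_one (hV : Vᴴ * V = 1) : ‖V‖ ≤ 1 := by
  have hsq : ‖V‖ * ‖V‖ ≤ 1 := by
    rw [← l2_opNorm_conjTranspose_mul_self, hV, ← diagonal_one, l2_opNorm_diagonal]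
    simpa using pi_norm_const_le (ι := n) (1 : 𝕜)
  nlinarith [norm_nonneg V]

lemma l2_opNorm_mul_of_conjTranspose_mul_self_eq_one [DecidableEq m] (hV : Vᴴ * V = 1)
    (X : Matrix n l 𝕜) : ‖V * X‖ = ‖X‖ := by
  have hV1 := l2_opNorm_le_one_of_conjTranspose_mul_self_eq_one hV
  refine le_antisymm ?_ ?_
  · calc ‖V * X‖ ≤ ‖V‖ * ‖X‖ := l2_opNorm_mul V X
      _ ≤ ‖X‖ := mul_le_of_le_one_left (norm_nonneg X) hV1
  · calc ‖X‖ = ‖Vᴴ * (V * X)‖ := by rw [← Matrix.mul_assoc, hV, Matrix.one_mul]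
      _ ≤ ‖Vᴴ‖ * ‖V * X‖ := l2_opNorm_mul _ _
      _ ≤ ‖V * X‖ := by
        rw [l2_opNorm_conjTranspose]
        exact mul_le_of_le_one_left (norm_nonneg _) hV1

lemma one_sub_l2_opNorm_mul_le_l2_opNorm_add_mul [DecidableEq m] (hV : Vᴴ * V = 1)
    (E : Matrix m n 𝕜) (X : Matrix n l 𝕜) : (1 - ‖E‖) * ‖X‖ ≤ ‖(V + E) * X‖ := by
  have hEX : ‖E * X‖ ≤ ‖E‖ * ‖X‖ := l2_opNorm_mul E X
  have hVX : ‖V * X‖ - ‖E * X‖ ≤ ‖V * X + E * X‖ := by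
    simpa using norm_sub_norm_le (V * X) (-(E * X))
  rw [l2_opNorm_mul_of_conjTranspose_mul_self_eq_one hV] at hVX
  rw [Matrix.add_mul]
  linarith

end Isometry

lemma l2_opNorm_transpose {m n : Type*} [Fintype m] [Fintype n] [DecidableEq m] [DecidableEq n]
    (A : Matrix m n ℝ) : ‖Aᵀ‖ = ‖A‖ := by
  rw [← conjTranspose_eq_transpose_of_trivial, l2_opNorm_conjTranspose]

lemma mul_transpose_alignment_error {α : Type*} [CommRing α] {m n : Type*} [Fintype n]
    [DecidableEq n] (R : Matrix m n α) {Q S S' : Matrix n n α} (Qbar : Matrix n n α)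
    (hQ : IsUnit Q) (hS : Sᵀ = S) (hSS' : S' * S = 1) :
    R * Q⁻¹ᵀ * S' * (S * Qbar⁻¹ * Q * S - S * S)ᵀ = R * (Qbar⁻¹ᵀ - Q⁻¹ᵀ) * S := by
  have hQQ : Q⁻¹ᵀ * Qᵀ = 1 := by
    rw [← transpose_mul, mul_nonsing_inv Q ((isUnit_iff_isUnit_det Q).mp hQ), transpose_one]
  simp only [transpose_sub, transpose_mul, hS, Matrix.mul_sub, Matrix.sub_mul,
    ← Matrix.mul_assoc]
  rw [Matrix.mul_assoc (R * Q⁻¹ᵀ) S' S, hSS', Matrix.mul_one,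
    Matrix.mul_assoc R Q⁻¹ᵀ Qᵀ, hQQ, Matrix.mul_one]

end Matrix

lemma opNorm_eq_l2_opNorm {n₁ n₂ : ℕ} (A : Matrix (Fin n₁) (Fin n₂) ℝ) : opNorm A = ‖A‖ := rfl

theorem alignment_perturbation_bound_general {n₂ r : ℕ}
    (Vstar : Matrix (Fin n₂) (Fin r) ℝ) (σ : Fin r → ℝ)
    (hV : Vstarᵀ * Vstar = 1) (hσ : ∀ i, 0 < σ i)
    (Rstar : Matrix (Fin n₂) (Fin r) ℝ)
    (hRstar : Rstar = Vstar * Matrix.diagonal (fun i => Real.sqrt (σ i)))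
    (R : Matrix (Fin n₂) (Fin r) ℝ)
    (Q Qbar : Matrix (Fin r) (Fin r) ℝ) (hQ : IsUnit Q)
    (hcontr : opNorm ((R * (Q⁻¹)ᵀ - Rstar) *
      Matrix.diagonal (fun i => (Real.sqrt (σ i))⁻¹)) < 1) :
    opNorm (Matrix.diagonal (fun i => Real.sqrt (σ i)) * Qbar⁻¹ * Q *
        Matrix.diagonal (fun i => Real.sqrt (σ i)) - Matrix.diagonal σ) ≤
      opNorm (R * ((Qbar⁻¹)ᵀ - (Q⁻¹)ᵀ) * Matrix.diagonal (fun i => Real.sqrt (σ i))) /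
        (1 - opNorm ((R * (Q⁻¹)ᵀ - Rstar) *
          Matrix.diagonal (fun i => (Real.sqrt (σ i))⁻¹))) := by
  set S := Matrix.diagonal (fun i => Real.sqrt (σ i))
  set S' := Matrix.diagonal (fun i => (Real.sqrt (σ i))⁻¹)
  set E := (R * (Q⁻¹)ᵀ - Rstar) * S' with hE
  have hsqrt : ∀ i, Real.sqrt (σ i) ≠ 0 := fun i => (Real.sqrt_pos.2 (hσ i)).ne'
  have hSS' : S * S' = 1 := by simp [S, S', diagonal_mul_diagonal, hsqrt]
  have hS'S : S' * S = 1 := by simp [S, S', diagonal_mul_diagonal, hsqrt]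
  have hSS : S * S = Matrix.diagonal σ := by
    simp [S, diagonal_mul_diagonal, Real.mul_self_sqrt (hσ _).le]
  have hM : R * (Q⁻¹)ᵀ * S' = Vstar + E := by
    rw [hE, Matrix.sub_mul, hRstar, Matrix.mul_assoc Vstar, hSS', Matrix.mul_one]
    abel
  have hlower := one_sub_l2_opNorm_mul_le_l2_opNorm_add_mul
    (by rwa [conjTranspose_eq_transpose_of_trivial]) E
    (S * Qbar⁻¹ * Q * S - S * S)ᵀ
  rw [← hM, mul_transpose_alignment_error R Qbar hQ (diagonal_transpose _) hS'S, hSS,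
    l2_opNorm_transpose] at hlower
  simp only [opNorm_eq_l2_opNorm] at hcontr ⊢
  rw [le_div_iff₀ (sub_pos.2 hcontr), mul_comm]
  exact hlower

/-- Perturbation bound for alignment matrices:
`‖Σ^{1/2} Q̄⁻¹ Q Σ^{1/2} − Σ‖_op ≤ ‖R (Q̄^{-T} − Q^{-T}) Σ^{1/2}‖_op / (1 − ‖(R Q^{-T} − R_star) Σ^{-1/2}‖_op)`. -/
theorem alignment_perturbation_bound {n₂ r : ℕ}
    (Vstar : Matrix (Fin n₂) (Fin r) ℝ) (σ : Fin r → ℝ)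
    (hV : Vstarᵀ * Vstar = 1) (hσ : ∀ i, 0 < σ i)
    (Rstar : Matrix (Fin n₂) (Fin r) ℝ)
    (hRstar : Rstar = Vstar * Matrix.diagonal (fun i => Real.sqrt (σ i)))
    (R : Matrix (Fin n₂) (Fin r) ℝ)
    (Q Qbar : Matrix (Fin r) (Fin r) ℝ) (hQ : IsUnit Q) (hQbar : IsUnit Qbar)
    (hfull : (R * (Q⁻¹)ᵀ).rank = r)
    (hcontr : opNorm ((R * (Q⁻¹)ᵀ - Rstar) *
      Matrix.diagonal (fun i => (Real.sqrt (σ i))⁻¹)) < 1) :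
    opNorm (Matrix.diagonal (fun i => Real.sqrt (σ i)) * Qbar⁻¹ * Q *
        Matrix.diagonal (fun i => Real.sqrt (σ i)) - Matrix.diagonal σ) ≤
      opNorm (R * ((Qbar⁻¹)ᵀ - (Q⁻¹)ᵀ) * Matrix.diagonal (fun i => Real.sqrt (σ i))) /
        (1 - opNorm ((R * (Q⁻¹)ᵀ - Rstar) *
          Matrix.diagonal (fun i => (Real.sqrt (σ i))⁻¹))) :=
  alignment_perturbation_bound_general Vstar σ hV hσ Rstar hRstar R Q Qbar hQ hcontr
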